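/- Let k ≥ 3 be an integer. For every x ∈ C_k with x ∈ [0,1), one has g_k(Int.fract(k·x)) = Int.fract(2·g_k(x)); that is, g_k semiconjugates the k-transformation T_k restricted to C_k ∩ [0,1) with the doubling map T_2. -/

import Mathlib

open scoped ENNReal

/-- The `k`-transformation `x ↦ k·x mod 1`. -/
noncomputable def Tmap (k : ℕ) (x : ℝ) : ℝ := Int.fract ((k : ℝ) * x)

/-- The survivor set of the `k`-transformation with hole `(a,b)`. -/
def W (k : ℕ) (a b : ℝ) : Set ℝ :=
  {x | x ∈ Set.Ico (0 : ℝ) 1 ∧ ∀ n : ℕ, (Tmap k)^[n] x ∉ Set.Ioo a b}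

/-- The generalized Cantor set `C_k`. -/
def Ck (k : ℕ) : Set ℝ :=
  {x | ∃ a : ℕ → ℕ, (∀ n, a n = 0 ∨ a n = k - 1) ∧
    x = ∑' n : ℕ, (a n : ℝ) / (k : ℝ) ^ (n + 1)}

/-- The `n`-th `k`-ary digit of `x`. -/
noncomputable def digit (k : ℕ) (n : ℕ) (x : ℝ) : ℤ :=
  ⌊(k : ℝ) ^ (n + 1) * x⌋ % (k : ℤ)

open Classical in
/-- The generalized Cantor function `g_k`. -/
noncomputable def gk (k : ℕ) (x : ℝ) : ℝ :=
  if x = 1 then 1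
  else if ∀ n, digit k n x = 0 ∨ digit k n x = (k : ℤ) - 1 then
    ∑' n : ℕ, (digit k n x : ℝ) / (((k : ℝ) - 1) * 2 ^ (n + 1))
  else
    (∑ n ∈ Finset.range (sInf {n : ℕ | ¬(digit k n x = 0 ∨ digit k n x = (k : ℤ) - 1)}),
      (digit k n x : ℝ) / (((k : ℝ) - 1) * 2 ^ (n + 1))) +
    1 / 2 ^ (sInf {n : ℕ | ¬(digit k n x = 0 ∨ digit k n x = (k : ℤ) - 1)} + 1)

/-- The Thue–Morse sequence: parity of the number of 1s in the binary expansion. -/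
def tm (n : ℕ) : ℕ := (Nat.digits 2 n).sum % 2


/-!
Write `T x = fract (k x)`. Since `T` shifts the `k`-ary digits, `d_n (T x) = d_{n+1} x`, and `g_k`
reads the digits up to the first non-Cantor one, a Cantor first digit `d_0 x ∈ {0, k-1}` gives
`2 g_k(x) = d_0 x / (k-1) + g_k(T x)`, where the first summand is `0` or `1` and `g_k(T x) ∈ [0,1)`.
A point of `C_k ∩ [0,1)` whose first digit is not Cantor is `1/k = 0.0(k-1)(k-1)…`, where both
sides vanish.
-/

lemma hasSum_one_div_two_pow_succ : HasSum (fun n : ℕ ↦ (1 : ℝ) / 2 ^ (n + 1)) 1 := by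
  convert hasSum_geometric_two' 1 using 2 with n
  ring

lemma sum_range_one_div_two_pow_succ (N : ℕ) :
    ∑ n ∈ Finset.range N, (1 : ℝ) / 2 ^ (n + 1) = 1 - 1 / 2 ^ N := by
  induction N with
  | zero => simp
  | succ N ih => rw [Finset.sum_range_succ, ih]; ring

-- Reducible, so that it matches the condition written out in `gk`.
abbrev IsCantorDigit (k : ℕ) (d : ℤ) : Prop := d = 0 ∨ d = (k : ℤ) - 1

section

variable {k : ℕ} {x : ℝ}

lemma digit_nonneg (hk : 0 < k) (n : ℕ) (x : ℝ) : 0 ≤ digit k n x :=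
  Int.emod_nonneg _ (by positivity)

lemma digit_lt (hk : 0 < k) (n : ℕ) (x : ℝ) : digit k n x < k :=
  Int.emod_lt_of_pos _ (by positivity)

lemma digit_fract_mul (n : ℕ) (x : ℝ) :
    digit k n (Int.fract ((k : ℝ) * x)) = digit k (n + 1) x := by
  have h : (k : ℝ) ^ (n + 1) * Int.fract ((k : ℝ) * x)
      = (k : ℝ) ^ (n + 1 + 1) * x - ((k * (k ^ n * ⌊(k : ℝ) * x⌋) : ℤ) : ℝ) := by
    rw [Int.fract]; push_cast; ring
  rw [digit, digit, h, Int.floor_sub_intCast, Int.sub_mul_emod_self_left]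

lemma digit_eq_digits [NeZero k] (hx : 0 ≤ x) (n : ℕ) :
    digit k n x = (Real.digits x k n : ℕ) := by
  rw [digit, Real.digits, Fin.val_ofNat, Int.natCast_mod, mul_comm,
    ← Int.natCast_floor_eq_floor (by positivity)]

lemma exists_digit_ne_sub_one (hk : 1 < k) (hx : x ∈ Set.Ico (0 : ℝ) 1) :
    ∃ n, digit k n x ≠ (k : ℤ) - 1 := by
  have : NeZero k := ⟨by omega⟩
  -- otherwise `x = 0.(k-1)(k-1)… = 1`
  by_contra! h
  have hdigits : Real.digits x k = fun _ ↦ ⟨k - 1, Nat.sub_one_lt_of_lt hk⟩ := by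
    funext n
    ext
    have := h n
    rw [digit_eq_digits hx.1] at this
    simp only
    omega
  have := Real.ofDigits_digits hk hx
  rw [hdigits, Real.ofDigits_const_last_eq_one' hk] at this
  exact hx.2.ne' this

lemma gk_eq_tsum (hx : x ≠ 1) (h : ∀ n, IsCantorDigit k (digit k n x)) :
    gk k x = ∑' n : ℕ, (digit k n x : ℝ) / (((k : ℝ) - 1) * 2 ^ (n + 1)) := by
  rw [gk, if_neg hx, if_pos h]

lemma gk_eq_sum {N : ℕ} (hx : x ≠ 1) (hN : ¬IsCantorDigit k (digit k N x))
    (hlt : ∀ n < N, IsCantorDigit k (digit k n x)) :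
    gk k x = (∑ n ∈ Finset.range N, (digit k n x : ℝ) / (((k : ℝ) - 1) * 2 ^ (n + 1))) +
      1 / 2 ^ (N + 1) := by
  have hinf : sInf {n : ℕ | ¬IsCantorDigit k (digit k n x)} = N :=
    le_antisymm (Nat.sInf_le hN) (le_csInf ⟨N, hN⟩ fun n hn ↦ not_lt.1 fun h ↦ hn (hlt n h))
  rw [gk, if_neg hx, if_neg fun h ↦ hN (h N), hinf]

lemma exists_least_not_isCantorDigit (h : ¬∀ n, IsCantorDigit k (digit k n x)) :
    ∃ N, ¬IsCantorDigit k (digit k N x) ∧ ∀ n < N, IsCantorDigit k (digit k n x) := by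
  classical
  have h' := not_forall.1 h
  exact ⟨Nat.find h', Nat.find_spec h', fun n hn ↦ not_not.1 (Nat.find_min h' hn)⟩

lemma digit_div_nonneg (hk : 0 < k) (n : ℕ) (x : ℝ) :
    0 ≤ (digit k n x : ℝ) / (((k : ℝ) - 1) * 2 ^ (n + 1)) := by
  have hk' : (0 : ℝ) ≤ k - 1 := sub_nonneg.2 (Nat.one_le_cast.2 hk)
  exact div_nonneg (Int.cast_nonneg (digit_nonneg hk n x)) (by positivity)

lemma digit_div_le (hk : 1 < k) (n : ℕ) (x : ℝ) :
    (digit k n x : ℝ) / (((k : ℝ) - 1) * 2 ^ (n + 1)) ≤ 1 / 2 ^ (n + 1) := by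
  have hk' : (0 : ℝ) < k - 1 := by
    have : (1 : ℝ) < k := by exact_mod_cast hk
    linarith
  have hd : (digit k n x : ℝ) ≤ k - 1 := by
    have := digit_lt (zero_lt_one.trans hk) n x
    have : (digit k n x : ℝ) + 1 ≤ k := by exact_mod_cast this
    linarith
  rw [← div_div, div_le_div_iff_of_pos_right (by positivity)]
  exact div_le_one_of_le₀ hd hk'.le

lemma summable_digit_div (hk : 1 < k) (x : ℝ) :
    Summable fun n ↦ (digit k n x : ℝ) / (((k : ℝ) - 1) * 2 ^ (n + 1)) :=
  .of_nonneg_of_le (digit_div_nonneg (zero_lt_one.trans hk) · x) (digit_div_le hk · x)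
    hasSum_one_div_two_pow_succ.summable

lemma gk_nonneg (hk : 0 < k) (x : ℝ) : 0 ≤ gk k x := by
  unfold gk
  split_ifs
  · exact zero_le_one
  · exact tsum_nonneg (digit_div_nonneg hk · x)
  · exact add_nonneg (Finset.sum_nonneg fun n _ ↦ digit_div_nonneg hk n x) (by positivity)

lemma gk_lt_one (hk : 1 < k) (hx : x ∈ Set.Ico (0 : ℝ) 1) : gk k x < 1 := by
  by_cases hall : ∀ n, IsCantorDigit k (digit k n x)
  · obtain ⟨m, hm⟩ := exists_digit_ne_sub_one hk hx
    have hm0 : digit k m x = 0 := (hall m).resolve_right hm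
    rw [gk_eq_tsum hx.2.ne hall]
    refine lt_of_lt_of_eq ?_ hasSum_one_div_two_pow_succ.tsum_eq
    refine Summable.tsum_lt_tsum_of_nonneg (i := m) (digit_div_nonneg (zero_lt_one.trans hk) · x)
      (digit_div_le hk · x) ?_ hasSum_one_div_two_pow_succ.summable
    rw [hm0, Int.cast_zero, zero_div]
    positivity
  · obtain ⟨N, hN, hlt⟩ := exists_least_not_isCantorDigit hall
    rw [gk_eq_sum hx.2.ne hN hlt]
    calc _ ≤ (∑ n ∈ Finset.range N, (1 : ℝ) / 2 ^ (n + 1)) + 1 / 2 ^ (N + 1) :=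
          add_le_add_left (Finset.sum_le_sum fun n _ ↦ digit_div_le hk n x) _
      _ < 1 := by
          have : (1 : ℝ) / 2 ^ (N + 1) < 1 / 2 ^ N := by gcongr <;> norm_num
          rw [sum_range_one_div_two_pow_succ]
          linarith

lemma two_mul_gk (hk : 1 < k) (hx : x ≠ 1) (h0 : IsCantorDigit k (digit k 0 x)) :
    2 * gk k x = (digit k 0 x : ℝ) / ((k : ℝ) - 1) + gk k (Int.fract ((k : ℝ) * x)) := by
  have hy : Int.fract ((k : ℝ) * x) ≠ 1 := (Int.fract_lt_one _).ne
  have hshift (n : ℕ) := digit_fract_mul (k := k) n x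
  have hhalf (d : ℝ) (n : ℕ) :
      2 * (d / (((k : ℝ) - 1) * 2 ^ (n + 1))) = d / (((k : ℝ) - 1) * 2 ^ n) := by
    rw [pow_succ, ← mul_assoc, ← div_div]
    ring
  by_cases hall : ∀ n, IsCantorDigit k (digit k n x)
  · have hall' (n : ℕ) : IsCantorDigit k (digit k n (Int.fract ((k : ℝ) * x))) :=
      hshift n ▸ hall (n + 1)
    rw [gk_eq_tsum hx hall, gk_eq_tsum hy hall', (summable_digit_div hk x).tsum_eq_zero_add,
      mul_add, ← tsum_mul_left]
    simp only [hshift, hhalf, pow_zero, mul_one]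
  · obtain ⟨N, hN, hlt⟩ := exists_least_not_isCantorDigit hall
    obtain ⟨m, rfl⟩ : ∃ m, N = m + 1 :=
      Nat.exists_eq_add_one.2 (Nat.pos_of_ne_zero fun h ↦ hN (h ▸ h0))
    have hm : ¬IsCantorDigit k (digit k m (Int.fract ((k : ℝ) * x))) := hshift m ▸ hN
    have hltm (n : ℕ) (hn : n < m) : IsCantorDigit k (digit k n (Int.fract ((k : ℝ) * x))) :=
      hshift n ▸ hlt (n + 1) (by omega)
    rw [gk_eq_sum hx hN hlt, gk_eq_sum hy hm hltm, Finset.sum_range_succ', mul_add, mul_add,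
      Finset.mul_sum]
    simp only [hshift, hhalf]
    ring

lemma gk_fract_mul (hk : 1 < k) (hx : x ≠ 1) (h0 : IsCantorDigit k (digit k 0 x)) :
    gk k (Int.fract ((k : ℝ) * x)) = Int.fract (2 * gk k x) := by
  have hgk : gk k (Int.fract ((k : ℝ) * x)) ∈ Set.Ico (0 : ℝ) 1 :=
    ⟨gk_nonneg (zero_lt_one.trans hk) _,
      gk_lt_one hk ⟨Int.fract_nonneg _, Int.fract_lt_one _⟩⟩
  obtain ⟨ε, hε⟩ : ∃ ε : ℤ, (digit k 0 x : ℝ) / ((k : ℝ) - 1) = ε := by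
    rcases h0 with h | h
    · exact ⟨0, by simp [h]⟩
    · have : (k : ℝ) - 1 ≠ 0 := sub_ne_zero.2 (by exact_mod_cast hk.ne')
      exact ⟨1, by rw [h]; push_cast; exact div_self this⟩
  rw [two_mul_gk hk hx h0, hε, Int.fract_intCast_add, Int.fract_eq_self.2 hgk]

lemma eq_inv_of_mem_Ck (hk : 0 < k) (hxC : x ∈ Ck k) (hx : x < 1)
    (h0 : ¬IsCantorDigit k (digit k 0 x)) : x = (k : ℝ)⁻¹ := by
  obtain ⟨a, ha, rfl⟩ := hxC
  have hak (n : ℕ) : a n < k := by rcases ha n with h | h <;> omega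
  set b : ℕ → Fin k := fun n ↦ ⟨a n, hak n⟩
  have hb : ∑' n, (a n : ℝ) / (k : ℝ) ^ (n + 1) = Real.ofDigits b := by
    simp [b, Real.ofDigits, Real.ofDigitsTerm, div_eq_mul_inv]
  set y := Real.ofDigits fun i ↦ b (i + 1)
  have hsplit : (k : ℝ) * Real.ofDigits b = a 0 + y := by
    rw [Real.ofDigits_eq_sum_add_ofDigits b 1]
    simp [b, Real.ofDigitsTerm, y]
    field_simp
  rw [hb] at hx h0 ⊢
  -- if `y < 1`, the first digit of `x` would be `a 0`
  have hy : y = 1 := by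
    refine (Real.ofDigits_le_one _).antisymm (not_lt.1 fun hy ↦ h0 ?_)
    have hd : digit k 0 (Real.ofDigits b) = a 0 := by
      rw [digit, pow_one, hsplit, Int.floor_natCast_add,
        Int.floor_eq_zero_iff.2 ⟨Real.ofDigits_nonneg _, hy⟩, add_zero]
      exact Int.emod_eq_of_lt (by positivity) (by exact_mod_cast hak 0)
    rw [hd]
    rcases ha 0 with h | h
    · exact Or.inl (by rw [h]; rfl)
    · exact Or.inr (by rw [h]; omega)
  have ha0 : a 0 = 0 := (ha 0).resolve_right fun h ↦ by
    have : (k : ℝ) * Real.ofDigits b < k * 1 := by gcongr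
    rw [hsplit, hy, h, mul_one, Nat.cast_sub hk] at this
    simp at this
  rw [ha0, hy, Nat.cast_zero, zero_add] at hsplit
  exact eq_inv_of_mul_eq_one_right hsplit

lemma gk_zero : gk k 0 = 0 := by
  simp [gk, digit]

lemma gk_inv_natCast (hk : 3 ≤ k) : gk k (k : ℝ)⁻¹ = 1 / 2 := by
  have hk0 : (k : ℝ) ≠ 0 := by positivity
  have hd : digit k 0 (k : ℝ)⁻¹ = 1 := by
    rw [digit, pow_one, mul_inv_cancel₀ hk0, Int.floor_one]
    exact Int.emod_eq_of_lt zero_le_one (by omega)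
  have hN : ¬IsCantorDigit k (digit k 0 (k : ℝ)⁻¹) := by
    rw [hd]
    omega
  have hne : (k : ℝ)⁻¹ ≠ 1 := by
    rw [ne_eq, inv_eq_one]
    exact_mod_cast (by omega : k ≠ 1)
  rw [gk_eq_sum hne hN nofun]
  norm_num

end

/-- `g_k` semiconjugates `T_k` on `C_k ∩ [0,1)` with the doubling map. -/
theorem stmt13 (k : ℕ) (hk : 3 ≤ k) (x : ℝ) (hxC : x ∈ Ck k)
    (hx : x ∈ Set.Ico (0 : ℝ) 1) :
    gk k (Int.fract ((k : ℝ) * x)) = Int.fract (2 * gk k x) := by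
  by_cases h0 : IsCantorDigit k (digit k 0 x)
  · exact gk_fract_mul (by omega) hx.2.ne h0
  · rw [eq_inv_of_mem_Ck (by omega) hxC hx.2 h0, mul_inv_cancel₀ (by positivity),
      Int.fract_one, gk_zero, gk_inv_natCast hk]
    norm_num
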